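/- arXiv:2101.00682 — 2 statements merged into one kernel-verified Lean document; each statement's English description precedes it below -/
import Mathlib

section
/- Let X be a bounded subset of the hyperbolic plane ℍ, let p, q ∈ X be points realizing the diameter of X (dist(p,q) = diam(X)), let m be a midpoint of p and q, and let c be a barycenter of X. Then dist(c, m) ≤ 10. -/
/-!
In the hyperboloid model the midpoint relation reads `P + Q = 2 cosh (d / 2) • M` (with
`d = dist p q`), and pairing with a point `x` gives the median law
`cosh (dist x p) + cosh (dist x q) = 2 cosh (d / 2) cosh (dist x m)`. Since every point of `X` is
within `d` of `p` and `q`, the median law puts `X` in the ball around `m` of radius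
`arcosh (2 cosh (d / 2))`, so the minimal radius `r` is at most that. The barycenter `c` is within
`r` of `p` and `q`, and the median law at `x = c` then gives `cosh (dist c m) ≤ 2`.
-/

open scoped UpperHalfPlane
open Real

/-- `c` is a barycenter of `X` if it is the center of a smallest closed ball containing
`X`. -/
def IsBarycenter (X : Set ℍ) (c : ℍ) : Prop :=
  ∃ r : ℝ, 0 ≤ r ∧ X ⊆ Metric.closedBall c r ∧
    ∀ (c' : ℍ) (r' : ℝ), 0 ≤ r' → X ⊆ Metric.closedBall c' r' → r ≤ r'

theorem Real.cosh_eq_two_mul_cosh_half_sq_sub_one (x : ℝ) :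
    cosh x = 2 * cosh (x / 2) ^ 2 - 1 := by
  calc cosh x = cosh (2 * (x / 2)) := by ring_nf
    _ = 2 * cosh (x / 2) ^ 2 - 1 := by rw [cosh_two_mul, sinh_sq]; ring

namespace UpperHalfPlane

def minkowski (u v : ℝ × ℝ × ℝ) : ℝ := u.1 * v.1 - u.2.1 * v.2.1 - u.2.2 * v.2.2

/-- The standard isometry of the half-plane model onto the sheet `0 < u.1` of the hyperboloid
`minkowski u u = 1`. -/
noncomputable def toHyperboloid (z : ℍ) : ℝ × ℝ × ℝ :=
  ((z.re ^ 2 + z.im ^ 2 + 1) / (2 * z.im), z.re / z.im, (z.re ^ 2 + z.im ^ 2 - 1) / (2 * z.im))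

theorem minkowski_toHyperboloid (z w : ℍ) :
    minkowski (toHyperboloid z) (toHyperboloid w) = cosh (dist z w) := by
  have hz : z.im ≠ 0 := z.im_pos.ne'
  have hw : w.im ≠ 0 := w.im_pos.ne'
  have hdist : dist (z : ℂ) w ^ 2 = (z.re - w.re) ^ 2 + (z.im - w.im) ^ 2 := by
    rw [Complex.dist_eq, Complex.sq_norm, Complex.normSq_apply]
    simp only [Complex.sub_re, Complex.sub_im, coe_re, coe_im]
    ring
  rw [cosh_dist, hdist, minkowski, toHyperboloid, toHyperboloid]
  field_simp
  ring

theorem minkowski_toHyperboloid_self (z : ℍ) :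
    minkowski (toHyperboloid z) (toHyperboloid z) = 1 := by
  rw [minkowski_toHyperboloid, dist_self, cosh_zero]

/-- Reverse Cauchy–Schwarz: the orthogonal complement of a timelike vector is spacelike. -/
theorem eq_zero_of_minkowski_orthogonal {a m : ℝ × ℝ × ℝ} (hm : minkowski m m = 1)
    (ham : minkowski a m = 0) (ha : 0 ≤ minkowski a a) : a = 0 := by
  obtain ⟨a₀, a₁, a₂⟩ := a
  obtain ⟨m₀, m₁, m₂⟩ := m
  simp only [minkowski] at hm ham ha
  have key :
      a₀ ^ 2 + (a₁ * m₂ - a₂ * m₁) ^ 2 + (m₁ ^ 2 + m₂ ^ 2) * (a₀ * a₀ - a₁ * a₁ - a₂ * a₂) =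
        (a₀ * m₀ + a₁ * m₁ + a₂ * m₂) * (a₀ * m₀ - a₁ * m₁ - a₂ * m₂)
          - a₀ ^ 2 * (m₀ * m₀ - m₁ * m₁ - m₂ * m₂ - 1) := by
    ring
  rw [ham, hm] at key
  have h₀ : a₀ = 0 := by nlinarith [sq_nonneg (a₁ * m₂ - a₂ * m₁), sq_nonneg m₁, sq_nonneg m₂]
  subst h₀
  have h₁ : a₁ = 0 := by nlinarith [sq_nonneg a₂]
  have h₂ : a₂ = 0 := by nlinarith [sq_nonneg a₁]
  simp [h₁, h₂]

theorem toHyperboloid_add_eq_of_midpoint {p q m : ℍ} (hpm : dist p m = dist p q / 2)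
    (hmq : dist m q = dist p q / 2) :
    toHyperboloid p + toHyperboloid q = (2 * cosh (dist p q / 2)) • toHyperboloid m := by
  set t := cosh (dist p q / 2)
  have hpq : minkowski (toHyperboloid p) (toHyperboloid q) = 2 * t ^ 2 - 1 := by
    rw [minkowski_toHyperboloid, cosh_eq_two_mul_cosh_half_sq_sub_one]
  have hpm' : minkowski (toHyperboloid p) (toHyperboloid m) = t := by
    rw [minkowski_toHyperboloid, hpm]
  have hqm : minkowski (toHyperboloid q) (toHyperboloid m) = t := by
    rw [minkowski_toHyperboloid, dist_comm, hmq]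
  have hpp := minkowski_toHyperboloid_self p
  have hqq := minkowski_toHyperboloid_self q
  have hmm := minkowski_toHyperboloid_self m
  rw [← sub_eq_zero]
  refine eq_zero_of_minkowski_orthogonal hmm ?_ (le_of_eq ?_)
  all_goals
    simp only [minkowski, Prod.fst_sub, Prod.snd_sub, Prod.fst_add, Prod.snd_add, Prod.smul_fst,
      Prod.smul_snd, smul_eq_mul] at *
  · linear_combination hpm' + hqm - 2 * t * hmm
  · linear_combination -(hpp + hqq + 4 * t ^ 2 * hmm + 2 * hpq - 4 * t * hpm' - 4 * t * hqm)

theorem cosh_dist_add_cosh_dist_of_midpoint {p q m : ℍ} (hpm : dist p m = dist p q / 2)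
    (hmq : dist m q = dist p q / 2) (x : ℍ) :
    cosh (dist x p) + cosh (dist x q) = 2 * cosh (dist p q / 2) * cosh (dist x m) := by
  have h := congrArg (minkowski (toHyperboloid x)) (toHyperboloid_add_eq_of_midpoint hpm hmq)
  simp only [minkowski, Prod.fst_add, Prod.snd_add, Prod.smul_fst, Prod.smul_snd,
    smul_eq_mul] at h
  rw [← minkowski_toHyperboloid, ← minkowski_toHyperboloid, ← minkowski_toHyperboloid]
  simp only [minkowski]
  linear_combination h

theorem cosh_half_mul_cosh_dist_midpoint_le {p q m x : ℍ} {ρ : ℝ}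
    (hpm : dist p m = dist p q / 2) (hmq : dist m q = dist p q / 2)
    (hxp : dist x p ≤ ρ) (hxq : dist x q ≤ ρ) :
    cosh (dist p q / 2) * cosh (dist x m) ≤ cosh ρ := by
  have hρ : |ρ| = ρ := abs_of_nonneg (dist_nonneg.trans hxp)
  have hp : cosh (dist x p) ≤ cosh ρ := cosh_le_cosh.2 (by rwa [abs_dist, hρ])
  have hq : cosh (dist x q) ≤ cosh ρ := cosh_le_cosh.2 (by rwa [abs_dist, hρ])
  linarith [cosh_dist_add_cosh_dist_of_midpoint hpm hmq x]

theorem subset_closedBall_midpoint {X : Set ℍ} (hX : Bornology.IsBounded X) {p q m : ℍ}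
    (hp : p ∈ X) (hq : q ∈ X) (hdiam : dist p q = Metric.diam X)
    (hpm : dist p m = dist p q / 2) (hmq : dist m q = dist p q / 2) :
    X ⊆ Metric.closedBall m (arcosh (2 * cosh (dist p q / 2))) := by
  intro x hx
  set t := cosh (dist p q / 2)
  have hxm : t * cosh (dist x m) ≤ cosh (dist p q) :=
    cosh_half_mul_cosh_dist_midpoint_le hpm hmq
      (hdiam ▸ Metric.dist_le_diam_of_mem hX hx hp)
      (hdiam ▸ Metric.dist_le_diam_of_mem hX hx hq)
  have ht : 0 < t := cosh_pos _
  have hcosh : cosh (dist x m) ≤ 2 * t := by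
    rw [cosh_eq_two_mul_cosh_half_sq_sub_one (dist p q)] at hxm
    nlinarith
  rw [Metric.mem_closedBall, ← arcosh_cosh (dist_nonneg (x := x) (y := m))]
  exact (arcosh_le_arcosh (cosh_pos _) (by positivity)).2 hcosh

end UpperHalfPlane

open UpperHalfPlane in
/-- The barycenter of a bounded set in the hyperbolic plane is `10`-close to the midpoint
of any diameter-realizing segment. -/
theorem barycenter_close_to_midpoint (X : Set ℍ) (hbdd : Bornology.IsBounded X)
    (p q : ℍ) (hp : p ∈ X) (hq : q ∈ X) (hdiam : dist p q = Metric.diam X)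
    (m : ℍ) (hpm : dist p m = dist p q / 2) (hmq : dist m q = dist p q / 2)
    (c : ℍ) (hc : IsBarycenter X c) :
    dist c m ≤ 10 := by
  obtain ⟨r, hr₀, hXr, hmin⟩ := hc
  set t := cosh (dist p q / 2)
  have ht : 1 ≤ 2 * t := by linarith [one_le_cosh (dist p q / 2)]
  have hr : r ≤ arcosh (2 * t) :=
    hmin m _ (arcosh_nonneg ht) (subset_closedBall_midpoint hbdd hp hq hdiam hpm hmq)
  have hcoshr : cosh r ≤ 2 * t :=
    (cosh_strictMonoOn.monotoneOn hr₀ (arcosh_nonneg ht) hr).trans_eq (cosh_arcosh ht)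
  have hcm : t * cosh (dist c m) ≤ cosh r :=
    cosh_half_mul_cosh_dist_midpoint_le hpm hmq
      (Metric.mem_closedBall'.1 (hXr hp)) (Metric.mem_closedBall'.1 (hXr hq))
  have hcosh : cosh (dist c m) ≤ 2 := by nlinarith [cosh_pos (dist p q / 2)]
  by_contra! h
  have := cosh_strictMonoOn (by norm_num) dist_nonneg h
  linarith [cosh_eq 10, add_one_le_exp 10, exp_pos (-10)]
end

section
/- Let e be an isometry of the hyperbolic plane ℍ (a bijective distance-preserving map ℍ → ℍ), let X and Y be nonempty finite subsets of ℍ, and suppose X, e(X), and Y are all contained in closedBall(o, R). Let μ ≥ 0, suppose there is q ∈ Y ∩ X with dist(o, q) ≥ R − μ and there is q' ∈ Y ∩ e(X) with dist(o, q') ≥ R − μ, suppose diam(Y) ≤ diam(X), and suppose diam(X)/2 ≤ dist(o, q) and diam(X)/2 ≤ dist(o, q'). If c is a barycenter of X, then dist(c, e(c)) ≤ 180 + 6μ. -/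
/-!
The upper half-plane is `5`-hyperbolic in the sense of Gromov: the four-point condition follows
from the `sinh`-Ptolemy inequality, which is Euclidean Ptolemy rewritten through
`sinh (d(z, w) / 2) = |z - w| / (2 √(Im z Im w))`. In a `δ`-hyperbolic geodesic space the center
`c` of a smallest enclosing ball (radius `r`) of a set is a quasi-center: the center of any
enclosing ball of radius `r + ε` lies within `2ε + 4δ` of `c`. Since `q ∈ X` lies within `μ` of
the sphere `S(o, R)`, the ball of radius `r + μ + 2δ` around the point `p` of `[o, q]` at distance
`min r d(o, q)` from `q` contains `X`, so `d(c, p) ≤ 2μ + 8δ`; likewise `d(e c, p') ≤ 2μ + 8δ`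
for `p'` on `[o, q']`. Finally `d(q, q') ≤ diam Y ≤ diam X ≤ 2r` makes the Gromov product
`(q | q')_o` so large that `p` and `p'` are `2μ + 4δ`-close, for a total of `6μ + 20δ`.
-/

open scoped UpperHalfPlane
open Real UpperHalfPlane Metric

lemma Real.cosh_le_exp_abs (t : ℝ) : cosh t ≤ exp |t| := by
  rw [cosh_eq]
  linarith [exp_le_exp.2 (le_abs_self t), exp_le_exp.2 (neg_le_abs t)]

lemma Real.sinh_mul_sinh_le_exp (p : ℝ) {q : ℝ} (hq : 0 ≤ q) :
    sinh p * sinh q ≤ exp (p + q) / 4 := by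
  have hsinh (t : ℝ) : sinh t ≤ exp t / 2 := by rw [sinh_eq]; linarith [exp_pos (-t)]
  calc sinh p * sinh q ≤ exp p / 2 * (exp q / 2) :=
        mul_le_mul (hsinh p) (hsinh q) (sinh_nonneg_iff.2 hq) (by positivity)
    _ = exp (p + q) / 4 := by rw [exp_add]; ring

lemma Real.exp_div_two_sub_cosh_le_sinh_mul_sinh (p q : ℝ) :
    exp (p + q) / 2 - cosh (p - q) ≤ 2 * (sinh p * sinh q) := by
  have h : 2 * (sinh p * sinh q) = cosh (p + q) - cosh (p - q) := by
    rw [cosh_add, cosh_sub]; ring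
  rw [h, cosh_eq (p + q)]
  linarith [exp_pos (-(p + q))]

/-- The constant `10` is a generous bound for `2 log 4`. -/
lemma add_le_max_add_of_sinh_mul_sinh_le {a a' b b' c c' : ℝ}
    (hb' : 0 ≤ b') (hc' : 0 ≤ c') (ha : |a - a'| ≤ b + b')
    (h : sinh (a / 2) * sinh (a' / 2) ≤ sinh (b / 2) * sinh (b' / 2) + sinh (c / 2) * sinh (c' / 2)) :
    a + a' ≤ max (b + b') (c + c') + 10 := by
  set M := max (b + b') (c + c')
  have hbM : b + b' ≤ M := le_max_left _ _
  have hcM : c + c' ≤ M := le_max_right _ _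
  have hcosh : cosh (a / 2 - a' / 2) ≤ exp (M / 2) := by
    refine (cosh_le_exp_abs _).trans (exp_le_exp.2 ?_)
    rw [← sub_div, abs_div, abs_two]
    linarith
  have hbb : sinh (b / 2) * sinh (b' / 2) ≤ exp (M / 2) / 4 :=
    (sinh_mul_sinh_le_exp _ (by positivity)).trans (by gcongr; linarith)
  have hcc : sinh (c / 2) * sinh (c' / 2) ≤ exp (M / 2) / 4 :=
    (sinh_mul_sinh_le_exp _ (by positivity)).trans (by gcongr; linarith)
  have hlow := exp_div_two_sub_cosh_le_sinh_mul_sinh (a / 2) (a' / 2)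
  have h4 : exp ((a + a') / 2) ≤ 4 * exp (M / 2) := by
    rw [add_div]; linarith
  have h5 : 4 * exp (M / 2) < exp (M / 2 + 5) := by
    rw [exp_add]
    nlinarith [add_one_le_exp (5 : ℝ), exp_pos (M / 2)]
  linarith [exp_lt_exp.1 (h4.trans_lt h5)]

section Gromov

variable {α : Type*} [PseudoMetricSpace α]

noncomputable def gromovProduct (w x y : α) : ℝ := (dist w x + dist w y - dist x y) / 2

def IsGromovHyperbolic (α : Type*) [PseudoMetricSpace α] (δ : ℝ) : Prop :=
  ∀ w x y z : α, min (gromovProduct w x y) (gromovProduct w y z) - δ ≤ gromovProduct w x z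

lemma IsGromovHyperbolic.of_four_point {δ : ℝ}
    (h : ∀ x y z w : α,
      dist x z + dist y w ≤ max (dist x y + dist z w) (dist x w + dist y z) + 2 * δ) :
    IsGromovHyperbolic α δ := by
  intro w x y z
  have h4 := h x y z w
  simp only [gromovProduct, dist_comm w, sub_le_iff_le_add]
  rcases le_total (dist x y + dist z w) (dist x w + dist y z) with hm | hm
  · rw [max_eq_right hm] at h4
    exact (min_le_right _ _).trans (by linarith)
  · rw [max_eq_left hm] at h4
    exact (min_le_left _ _).trans (by linarith)

variable {δ : ℝ}

lemma IsGromovHyperbolic.dist_le_max_of_dist_add_dist_eq (h : IsGromovHyperbolic α δ)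
    (x : α) {c m p : α} (hm : dist c m + dist m p = dist c p) :
    dist x m ≤ max (dist x c - dist c m) (dist x p - dist m p) + 2 * δ := by
  have hx := h x c m p
  simp only [gromovProduct, sub_le_iff_le_add, min_le_iff] at hx
  rcases hx with hx | hx
  · linarith [le_max_right (dist x c - dist c m) (dist x p - dist m p)]
  · linarith [le_max_left (dist x c - dist c m) (dist x p - dist m p)]

lemma IsGromovHyperbolic.dist_le_of_dist_add_dist_eq (h : IsGromovHyperbolic α δ)
    {o q q' p p' : α} (hp : dist o p + dist p q = dist o q)
    (hp' : dist o p' + dist p' q' = dist o q') :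
    dist p p' ≤ max |dist o p - dist o p'| (dist o p + dist o p' - 2 * gromovProduct o q q')
      + 4 * δ := by
  have hδ : 0 ≤ δ := by simpa [gromovProduct] using h o o o o
  have hpq : gromovProduct o p q = dist o p := by unfold gromovProduct; linarith
  have hq'p' : gromovProduct o q' p' = dist o p' := by
    unfold gromovProduct; linarith [dist_comm p' q']
  have hpp' : dist p p' = dist o p + dist o p' - 2 * gromovProduct o p p' := by
    unfold gromovProduct; ring
  have h₁ := h o p q q'
  have h₂ := h o p q' p'
  rw [hpq] at h₁
  rw [hq'p'] at h₂
  simp only [sub_le_iff_le_add, min_le_iff] at h₁ h₂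
  have hmax₁ := le_max_left |dist o p - dist o p'|
    (dist o p + dist o p' - 2 * gromovProduct o q q')
  have hmax₂ := le_max_right |dist o p - dist o p'|
    (dist o p + dist o p' - 2 * gromovProduct o q q')
  have habs₁ := le_abs_self (dist o p - dist o p')
  have habs₂ := neg_abs_le (dist o p - dist o p')
  rcases h₁ with h₁ | h₁ <;> rcases h₂ with h₂ | h₂ <;> linarith

lemma IsGromovHyperbolic.dist_le_of_near_sphere (h : IsGromovHyperbolic α δ)
    {o q q' p p' : α} {r R μ : ℝ} (hp : dist o p + dist p q = dist o q)
    (hp' : dist o p' + dist p' q' = dist o q') (hop : dist o p = max (dist o q - r) 0)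
    (hop' : dist o p' = max (dist o q' - r) 0) (hqq' : dist q q' ≤ 2 * r) (hrR : r ≤ R)
    (hq : dist o q ∈ Set.Icc (R - μ) R) (hq' : dist o q' ∈ Set.Icc (R - μ) R) :
    dist p p' ≤ 2 * μ + 4 * δ := by
  obtain ⟨hq₁, hq₂⟩ := hq
  obtain ⟨hq'₁, hq'₂⟩ := hq'
  refine (h.dist_le_of_dist_add_dist_eq hp hp').trans (add_le_add (max_le ?_ ?_) le_rfl)
  · rw [hop, hop']
    refine (abs_max_sub_max_le_abs _ _ _).trans ?_
    rw [abs_le]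
    constructor <;> linarith
  · have hs : dist o p ≤ dist o q - r + μ := hop ▸ max_le (by linarith) (by linarith)
    have hs' : dist o p' ≤ dist o q' - r + μ := hop' ▸ max_le (by linarith) (by linarith)
    unfold gromovProduct
    linarith

end Gromov

section MinimalEnclosingBall

variable {α β : Type*} [PseudoMetricSpace α] [PseudoMetricSpace β]

def IsMinimalEnclosingBall (S : Set α) (c : α) (r : ℝ) : Prop :=
  S ⊆ closedBall c r ∧ ∀ (c' : α) (r' : ℝ), 0 ≤ r' → S ⊆ closedBall c' r' → r ≤ r'

variable {S : Set α} {c : α} {r : ℝ}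

lemma IsMinimalEnclosingBall.le_of_subset_closedBall (h : IsMinimalEnclosingBall S c r)
    (hS : S.Nonempty) {o : α} {R : ℝ} (hSo : S ⊆ closedBall o R) : r ≤ R :=
  h.2 o R (nonempty_closedBall.1 (hS.mono hSo)) hSo

lemma IsMinimalEnclosingBall.image (h : IsMinimalEnclosingBall S c r) (e : α ≃ᵢ β) :
    IsMinimalEnclosingBall (e '' S) (e c) r := by
  refine ⟨(Set.image_mono h.1).trans (e.image_closedBall c r).le,
    fun c' r' hr' hsub => h.2 (e.symm c') r' hr' ?_⟩
  rw [← e.preimage_closedBall]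
  exact Set.image_subset_iff.1 hsub

end MinimalEnclosingBall

lemma Real.exists_dist_eq_and_dist_add_dist_eq (u v : ℝ) {t : ℝ} (h0 : 0 ≤ t)
    (ht : t ≤ dist u v) : ∃ s, dist u s = t ∧ dist u s + dist s v = dist u v := by
  simp only [Real.dist_eq] at *
  rcases le_total u v with huv | huv
  · rw [abs_of_nonpos (by linarith)] at ht
    exact ⟨u + t, by rw [abs_of_nonpos (by linarith)]; ring, by
      rw [abs_of_nonpos (by linarith), abs_of_nonpos (by linarith),
        abs_of_nonpos (by linarith)]; ring⟩
  · rw [abs_of_nonneg (by linarith)] at ht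
    exact ⟨u - t, by rw [abs_of_nonneg (by linarith)]; ring, by
      rw [abs_of_nonneg (by linarith), abs_of_nonneg (by linarith),
        abs_of_nonneg (by linarith)]; ring⟩

lemma Isometry.exists_dist_eq_and_dist_add_dist_eq {α : Type*} [PseudoMetricSpace α]
    {γ : ℝ → α} (hγ : Isometry γ) (u v : ℝ) {t : ℝ} (h0 : 0 ≤ t)
    (ht : t ≤ dist (γ u) (γ v)) :
    ∃ p, dist (γ u) p = t ∧ dist (γ u) p + dist p (γ v) = dist (γ u) (γ v) := by
  rw [hγ.dist_eq] at ht
  obtain ⟨s, hs, hsv⟩ := Real.exists_dist_eq_and_dist_add_dist_eq u v h0 ht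
  exact ⟨γ s, by rw [hγ.dist_eq, hs], by simp only [hγ.dist_eq, hsv]⟩

namespace UpperHalfPlane

/-- The Euclidean semicircle of center `a` and radius `ρ`. -/
noncomputable def semicircleGeodesic (a ρ : ℝ) (hρ : 0 < ρ) (u : ℝ) : ℍ :=
  mk ⟨a - ρ * tanh u, ρ / cosh u⟩ (by simpa using div_pos hρ (cosh_pos u))

lemma isometry_semicircleGeodesic (a ρ : ℝ) (hρ : 0 < ρ) :
    Isometry (semicircleGeodesic a ρ hρ) := by
  refine Isometry.of_dist_eq fun u v => ?_
  have hu := cosh_sq_sub_sinh_sq u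
  have hv := cosh_sq_sub_sinh_sq v
  have hcu := cosh_pos u
  have hcv := cosh_pos v
  have hcosh : cosh (dist (semicircleGeodesic a ρ hρ u) (semicircleGeodesic a ρ hρ v)) =
      cosh |u - v| := by
    rw [cosh_abs, cosh_dist', cosh_sub]
    simp only [semicircleGeodesic, re, im, tanh_eq_sinh_div_cosh]
    field_simp
    linear_combination (-(ρ ^ 2 * cosh v ^ 2)) * hu - ρ ^ 2 * cosh u ^ 2 * hv
  rw [Real.dist_eq]
  exact cosh_injOn (Set.mem_Ici.2 dist_nonneg) (Set.mem_Ici.2 (abs_nonneg _)) hcosh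

lemma semicircleGeodesic_arsinh (a ρ : ℝ) (hρ : 0 < ρ) (z : ℍ)
    (hz : (z.re - a) ^ 2 + z.im ^ 2 = ρ ^ 2) :
    semicircleGeodesic a ρ hρ (arsinh ((a - z.re) / z.im)) = z := by
  have hz0 := z.im_pos
  have hcosh : cosh (arsinh ((a - z.re) / z.im)) = ρ / z.im := by
    rw [cosh_arsinh, ← sqrt_sq (by positivity : 0 ≤ ρ / z.im)]
    congr 1
    field_simp
    linear_combination hz
  refine ext_re_im ?_ ?_
  · change a - ρ * tanh _ = z.re
    rw [tanh_eq_sinh_div_cosh, sinh_arsinh, hcosh]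
    field_simp
    ring
  · change ρ / cosh _ = z.im
    rw [hcosh]
    field_simp

lemma exists_geodesic_through (z w : ℍ) :
    ∃ γ : ℝ → ℍ, Isometry γ ∧ ∃ u v, γ u = z ∧ γ v = w := by
  rcases eq_or_ne z.re w.re with hre | hre
  · refine ⟨_, isometry_vertical_line z.re, log z.im, log w.im, ?_, ?_⟩ <;>
      refine ext_re_im ?_ ?_ <;> simp [hre, exp_log, im_pos]
  · -- the center of the semicircle is the point of `ℝ` equidistant from `z` and `w`
    set a := (z.re ^ 2 + z.im ^ 2 - w.re ^ 2 - w.im ^ 2) / (2 * (z.re - w.re))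
    have hzw : (z.re - a) ^ 2 + z.im ^ 2 = (w.re - a) ^ 2 + w.im ^ 2 := by
      have := sub_ne_zero.2 hre
      simp only [a]; field_simp; ring
    set ρ := √((z.re - a) ^ 2 + z.im ^ 2)
    have hρ : 0 < ρ := sqrt_pos.2 (by have := z.im_pos; positivity)
    have hz : (z.re - a) ^ 2 + z.im ^ 2 = ρ ^ 2 := (sq_sqrt (by positivity)).symm
    exact ⟨_, isometry_semicircleGeodesic a ρ hρ, _, _,
      semicircleGeodesic_arsinh a ρ hρ z hz, semicircleGeodesic_arsinh a ρ hρ w (hzw ▸ hz)⟩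

lemma exists_dist_eq_and_dist_add_dist_eq (z w : ℍ) {t : ℝ} (h0 : 0 ≤ t) (ht : t ≤ dist z w) :
    ∃ p, dist z p = t ∧ dist z p + dist p w = dist z w := by
  obtain ⟨γ, hγ, u, v, rfl, rfl⟩ := exists_geodesic_through z w
  exact hγ.exists_dist_eq_and_dist_add_dist_eq u v h0 ht

lemma sinh_half_dist_mul_sinh_half_dist (a b c d : ℍ) :
    sinh (dist a b / 2) * sinh (dist c d / 2) =
      dist (a : ℂ) b * dist (c : ℂ) d / (4 * √(a.im * b.im * c.im * d.im)) := by
  have := a.im_pos; have := b.im_pos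
  rw [sinh_half_dist, sinh_half_dist, div_mul_div_comm,
    show a.im * b.im * c.im * d.im = a.im * b.im * (c.im * d.im) by ring,
    sqrt_mul (by positivity) (c.im * d.im)]
  ring

lemma sinh_ptolemy (x y z w : ℍ) :
    sinh (dist x z / 2) * sinh (dist y w / 2) ≤
      sinh (dist x y / 2) * sinh (dist z w / 2) + sinh (dist y z / 2) * sinh (dist x w / 2) := by
  simp only [sinh_half_dist_mul_sinh_half_dist]
  rw [show x.im * z.im * y.im * w.im = x.im * y.im * z.im * w.im by ring,
    show y.im * z.im * x.im * w.im = x.im * y.im * z.im * w.im by ring, ← add_div]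
  have := x.im_pos; have := y.im_pos; have := z.im_pos; have := w.im_pos
  gcongr
  exact EuclideanGeometry.mul_dist_le_mul_dist_add_mul_dist (x : ℂ) y z w

lemma dist_add_dist_le_max (x y z w : ℍ) :
    dist x z + dist y w ≤ max (dist x y + dist z w) (dist x w + dist y z) + 10 := by
  refine add_le_max_add_of_sinh_mul_sinh_le dist_nonneg dist_nonneg ?_ ?_
  · rw [abs_sub_le_iff]
    constructor
    · linarith [dist_triangle4 x y w z, dist_comm w z]
    · linarith [dist_triangle4 y x z w, dist_comm y x]
  · linarith [sinh_ptolemy x y z w, mul_comm (sinh (dist y z / 2)) (sinh (dist x w / 2))]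

theorem isGromovHyperbolic : IsGromovHyperbolic ℍ 5 :=
  .of_four_point fun x y z w => by linarith [dist_add_dist_le_max x y z w]

variable {S : Set ℍ} {c : ℍ} {r : ℝ}

lemma IsMinimalEnclosingBall.dist_center_le (h : IsMinimalEnclosingBall S c r)
    (hS : S.Nonempty) {p : ℍ} {r' : ℝ} (hp : S ⊆ closedBall p r') :
    dist c p ≤ 2 * (r' - r) + 20 := by
  have hrr' := h.le_of_subset_closedBall hS hp
  obtain ⟨m, hcm, hm⟩ := exists_dist_eq_and_dist_add_dist_eq c p
    (by positivity) (half_le_self dist_nonneg)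
  have hSm : S ⊆ closedBall m (r' - dist c p / 2 + 10) := fun x hx => by
    have hxc := mem_closedBall.1 (h.1 hx)
    have hxp := mem_closedBall.1 (hp hx)
    have := isGromovHyperbolic.dist_le_max_of_dist_add_dist_eq x hm
    rw [mem_closedBall]
    linarith [max_le (show dist x c - dist c m ≤ r' - dist c p / 2 by linarith)
      (show dist x p - dist m p ≤ r' - dist c p / 2 by linarith)]
  linarith [h.le_of_subset_closedBall hS hSm]

lemma IsMinimalEnclosingBall.exists_dist_center_le_on_segment (h : IsMinimalEnclosingBall S c r)
    {o q : ℍ} {R μ : ℝ} (hSo : S ⊆ closedBall o R) (hq : q ∈ S) (hqμ : R - μ ≤ dist o q) :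
    ∃ p, dist o p = max (dist o q - r) 0 ∧ dist o p + dist p q = dist o q ∧
      dist c p ≤ 2 * μ + 40 := by
  have hqc := mem_closedBall.1 (h.1 hq)
  have hr : 0 ≤ r := dist_nonneg.trans hqc
  have hrR := h.le_of_subset_closedBall ⟨q, hq⟩ hSo
  have hqR := mem_closedBall'.1 (hSo hq)
  obtain ⟨p, hop, hpq⟩ := exists_dist_eq_and_dist_add_dist_eq o q (le_max_right _ _)
    (max_le (sub_le_self _ hr) dist_nonneg)
  refine ⟨p, hop, hpq, ?_⟩
  have hSp : S ⊆ closedBall p (r + μ + 10) := fun x hx => by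
    have hxo := mem_closedBall.1 (hSo hx)
    have hxq : dist x q ≤ 2 * r := by
      linarith [dist_triangle x c q, mem_closedBall.1 (h.1 hx), dist_comm q c]
    have hA : dist x o - dist o p ≤ r + μ := by linarith [le_max_left (dist o q - r) 0]
    have hB : dist x q - dist p q ≤ r + μ := by
      rcases max_cases (dist o q - r) 0 with ⟨hm, _⟩ | ⟨hm, _⟩ <;> linarith
    have := isGromovHyperbolic.dist_le_max_of_dist_add_dist_eq x hpq
    rw [mem_closedBall]
    linarith [max_le hA hB]
  linarith [h.dist_center_le ⟨q, hq⟩ hSp]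

end UpperHalfPlane

theorem barycenter_jump_general (e : ℍ ≃ᵢ ℍ) (X Y : Set ℍ)
    (o : ℍ) (R : ℝ)
    (hXR : X ⊆ Metric.closedBall o R) (heXR : (e '' X) ⊆ Metric.closedBall o R)
    (hYR : Y ⊆ Metric.closedBall o R)
    (μ : ℝ)
    (q : ℍ) (hqY : q ∈ Y) (hqX : q ∈ X) (hqμ : R - μ ≤ dist o q)
    (q' : ℍ) (hq'Y : q' ∈ Y) (hq'eX : q' ∈ e '' X) (hq'μ : R - μ ≤ dist o q')
    (hdiam : Metric.diam Y ≤ Metric.diam X)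
    (c : ℍ) (hc : IsBarycenter X c) :
    dist c (e c) ≤ 180 + 6 * μ := by
  obtain ⟨r, hr, hXc, hmin⟩ := hc
  have hX : IsMinimalEnclosingBall X c r := ⟨hXc, hmin⟩
  have hqq' : dist q q' ≤ 2 * r := calc
    dist q q' ≤ diam Y := dist_le_diam_of_mem (isBounded_closedBall.subset hYR) hqY hq'Y
    _ ≤ diam X := hdiam
    _ ≤ 2 * r := (diam_mono hXc isBounded_closedBall).trans (diam_closedBall hr)
  obtain ⟨p, hop, hpq, hcp⟩ := hX.exists_dist_center_le_on_segment hXR hqX hqμ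
  obtain ⟨p', hop', hpq', hcp'⟩ :=
    (hX.image e).exists_dist_center_le_on_segment heXR hq'eX hq'μ
  have hpp' : dist p p' ≤ 2 * μ + 20 := by
    have := isGromovHyperbolic.dist_le_of_near_sphere hpq hpq' hop hop' hqq'
      (hX.le_of_subset_closedBall ⟨q, hqX⟩ hXR) ⟨hqμ, mem_closedBall'.1 (hXR hqX)⟩
      ⟨hq'μ, mem_closedBall'.1 (heXR hq'eX)⟩
    linarith
  calc dist c (e c) ≤ dist c p + dist p p' + dist p' (e c) := dist_triangle4 _ _ _ _
    _ ≤ 180 + 6 * μ := by linarith [dist_comm p' (e c)]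

/-- If `X`, `e(X)` and `Y` lie in a ball, `Y` meets both `X` and `e(X)` in the
`μ`-neighborhood of the boundary, and `diam Y ≤ diam X`, then the barycenter `c` of `X`
is moved at most `180 + 6μ` by the isometry `e`. -/
theorem barycenter_jump (e : ℍ ≃ᵢ ℍ) (X Y : Set ℍ)
    (hXfin : X.Finite) (hXne : X.Nonempty) (hYfin : Y.Finite) (hYne : Y.Nonempty)
    (o : ℍ) (R : ℝ) (hR : 0 ≤ R)
    (hXR : X ⊆ Metric.closedBall o R) (heXR : (e '' X) ⊆ Metric.closedBall o R)
    (hYR : Y ⊆ Metric.closedBall o R)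
    (μ : ℝ) (hμ : 0 ≤ μ)
    (q : ℍ) (hqY : q ∈ Y) (hqX : q ∈ X) (hqμ : R - μ ≤ dist o q)
    (q' : ℍ) (hq'Y : q' ∈ Y) (hq'eX : q' ∈ e '' X) (hq'μ : R - μ ≤ dist o q')
    (hdiam : Metric.diam Y ≤ Metric.diam X)
    (hq2 : Metric.diam X / 2 ≤ dist o q) (hq'2 : Metric.diam X / 2 ≤ dist o q')
    (c : ℍ) (hc : IsBarycenter X c) :
    dist c (e c) ≤ 180 + 6 * μ :=
  barycenter_jump_general e X Y o R hXR heXR hYR μ q hqY hqX hqμ q' hq'Y hq'eX hq'μ hdiam c hc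
end
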